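/- arXiv:1507.00111 — 2 statements merged into one kernel-verified Lean document; each statement's English description precedes it below -/
import Mathlib

section
/- Let p be an odd prime, k ≥ 1, and let a, b be integers coprime to p with a^(p−1) ≡ b^(p−1) (mod p^(k−1)). Then there exists a (p−1)-th root of unity ζ ∈ ℤ_p such that |a − bζ|_p ≤ p^(−k+1). -/
/-!
Put `u = a / b`, a unit of `ℤ_[p]`. By Fermat `‖u ^ (p - 1) - 1‖ < 1`, while the derivative
`(p - 1) X ^ (p - 2)` of `X ^ (p - 1) - 1` is a unit at `u`, so Hensel's lemma gives a root `ζ`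
with `‖u - ζ‖ < 1`. Near a point where its derivative is a unit a polynomial is an isometry, hence
`‖u - ζ‖ = ‖u ^ (p - 1) - 1‖ = ‖a ^ (p - 1) - b ^ (p - 1)‖ ≤ p ^ (1 - k)`.
-/

open Polynomial

namespace PadicInt

variable {p : ℕ} [Fact p.Prime]

theorem norm_eval_sub_eval_eq_of_norm_derivative_eq_one {F : ℤ_[p][X]} {x y : ℤ_[p]}
    (hF : ‖F.derivative.eval x‖ = 1) (hxy : ‖y - x‖ < 1) :
    ‖F.eval y - F.eval x‖ = ‖y - x‖ := by
  obtain ⟨c, hc⟩ := F.binomExpansion x (y - x)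
  rw [add_sub_cancel] at hc
  have hsmall : ‖c * (y - x)‖ < 1 :=
    (norm_mul_le _ _).trans_lt <| by nlinarith [norm_le_one c, norm_nonneg (y - x)]
  have hunit : ‖F.derivative.eval x + c * (y - x)‖ = 1 := by
    rw [norm_add_eq_max_of_ne (by rw [hF]; exact hsmall.ne'), hF, max_eq_left hsmall.le]
  calc ‖F.eval y - F.eval x‖ = ‖(F.derivative.eval x + c * (y - x)) * (y - x)‖ := by
        rw [hc]; ring_nf
    _ = ‖y - x‖ := by rw [norm_mul, hunit, one_mul]

theorem norm_pow_sub_one_sub_one_lt_one {u : ℤ_[p]} (hu : ‖u‖ = 1) :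
    ‖u ^ (p - 1) - 1‖ < 1 := by
  have hu0 : toZMod u ≠ 0 := ((isUnit_iff.mpr hu).map toZMod).ne_zero
  rw [← mem_nonunits, ← IsLocalRing.mem_maximalIdeal, ← ker_toZMod, RingHom.mem_ker, map_sub,
    map_pow, map_one, ZMod.pow_card_sub_one_eq_one hu0, sub_self]

theorem exists_pow_eq_one_norm_sub_eq {u : ℤ_[p]} (hu : ‖u‖ = 1) :
    ∃ ζ : ℤ_[p], ζ ^ (p - 1) = 1 ∧ ‖u - ζ‖ = ‖u ^ (p - 1) - 1‖ := by
  set F : ℤ_[p][X] := X ^ (p - 1) - 1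
  have hFu : F.eval u = u ^ (p - 1) - 1 := by simp [F]
  have hF'u : ‖F.derivative.eval u‖ = 1 := by simp [F, derivative_X_pow, hu]
  obtain ⟨ζ, hζ, hζu, -, -⟩ := hensels_lemma (F := F) (a := u) <| by
    simpa [hFu, hF'u] using norm_pow_sub_one_sub_one_lt_one hu
  rw [coe_aeval_eq_eval] at hζ hζu
  refine ⟨ζ, by simpa [F, sub_eq_zero] using hζ, ?_⟩
  rw [← hFu, norm_sub_rev, ← norm_eval_sub_eval_eq_of_norm_derivative_eq_one hF'u
    (hζu.trans_eq hF'u), hζ, zero_sub, norm_neg]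

theorem exists_pow_eq_one_norm_sub_mul_eq {a b : ℤ_[p]} (ha : ‖a‖ = 1) (hb : ‖b‖ = 1) :
    ∃ ζ : ℤ_[p], ζ ^ (p - 1) = 1 ∧ ‖a - b * ζ‖ = ‖a ^ (p - 1) - b ^ (p - 1)‖ := by
  obtain ⟨B, rfl⟩ := isUnit_iff.mpr hb
  set u := a * ↑B⁻¹
  have hBu : ↑B * u = a := by rw [mul_left_comm, Units.mul_inv, mul_one]
  obtain ⟨ζ, hζ, hdist⟩ := exists_pow_eq_one_norm_sub_eq (u := u) <| by
    rw [norm_mul, ha, isUnit_iff.mp B⁻¹.isUnit, one_mul]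
  refine ⟨ζ, hζ, ?_⟩
  calc ‖a - B * ζ‖ = ‖(B : ℤ_[p]) * (u - ζ)‖ := by rw [mul_sub, hBu]
    _ = ‖(B : ℤ_[p]) ^ (p - 1) * (u ^ (p - 1) - 1)‖ := by
      rw [norm_mul, norm_mul, norm_pow, hb, hdist, one_pow]
    _ = ‖a ^ (p - 1) - B ^ (p - 1)‖ := by rw [mul_sub, ← mul_pow, hBu, mul_one]

end PadicInt

theorem stmt_5_general (p : ℕ) [Fact p.Prime] (k : ℕ)
    (a b : ℤ) (hab : IsCoprime (a * b) (p : ℤ))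
    (h : (p : ℤ) ^ (k - 1) ∣ a ^ (p - 1) - b ^ (p - 1)) :
    ∃ ζ : ℤ_[p], ζ ^ (p - 1) = 1 ∧
      ‖(a : ℤ_[p]) - (b : ℤ_[p]) * ζ‖ ≤ (p : ℝ) ^ (-(k : ℤ) + 1) := by
  obtain ⟨ζ, hζ, hdist⟩ := PadicInt.exists_pow_eq_one_norm_sub_mul_eq (p := p)
    (PadicInt.norm_intCast_eq_one_iff.mpr hab.of_mul_left_left)
    (PadicInt.norm_intCast_eq_one_iff.mpr hab.of_mul_left_right)
  refine ⟨ζ, hζ, ?_⟩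
  calc ‖(a : ℤ_[p]) - b * ζ‖ = ‖((a ^ (p - 1) - b ^ (p - 1) : ℤ) : ℤ_[p])‖ := by
        rw [hdist]; push_cast; rfl
    _ ≤ (p : ℝ) ^ (-((k - 1 : ℕ) : ℤ)) := PadicInt.norm_int_le_pow_iff_dvd.mpr h
    _ ≤ (p : ℝ) ^ (-(k : ℤ) + 1) :=
      zpow_le_zpow_right₀ (mod_cast (Fact.out : p.Prime).one_le) (by omega)

theorem stmt_5 (p : ℕ) [Fact p.Prime] (hp2 : p ≠ 2) (k : ℕ) (hk : 1 ≤ k)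
    (a b : ℤ) (hab : IsCoprime (a * b) (p : ℤ))
    (h : (p : ℤ) ^ (k - 1) ∣ a ^ (p - 1) - b ^ (p - 1)) :
    ∃ ζ : ℤ_[p], ζ ^ (p - 1) = 1 ∧
      ‖(a : ℤ_[p]) - (b : ℤ_[p]) * ζ‖ ≤ (p : ℝ) ^ (-(k : ℤ) + 1) :=
  stmt_5_general p k a b hab h
end

section
/- Let p be an odd prime and k ≥ 2. Suppose integers a, b satisfy gcd(ab, p) = 1, a^(p−1) ≡ b^(p−1) (mod p^(k−1)), and a ≢ ±b (mod p^(k−1)). Then there exists a (p−1)-th root of unity ζ ∈ ℤ_p with ζ ≠ 1 and ζ ≠ −1 such that |a − bζ|_p ≤ p^(−k+1). -/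
/-!
Since `a ^ (p - 1) ≡ b ^ (p - 1) (mod p)`, the unit `a / b` of `ℤ_p` is a simple root of
`X ^ (p - 1) - 1` modulo `p`, so Hensel's lemma lifts it to a root of unity `ζ` with `a ≡ b ζ`.
Writing `a ^ (p - 1) - b ^ (p - 1) = a ^ (p - 1) - (b ζ) ^ (p - 1)` as `a - b ζ` times a geometric
sum that is `≡ (p - 1) a ^ (p - 2) (mod p)`, hence a unit, the power `p ^ (k - 1)` dividing the
left side divides `a - b ζ`. This rules out `ζ = ±1`, as `a ≢ ±b (mod p ^ (k - 1))`.
-/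

open Polynomial

theorem Prime.pow_dvd_sub_of_pow_dvd_pow_sub_pow {R : Type*} [CommRing R] [IsDomain R] {π x y : R}
    (hπ : Prime π) (hxy : π ∣ x - y) (hx : ¬π ∣ x) {n : ℕ} (hn : ¬π ∣ n) {m : ℕ}
    (h : π ^ m ∣ x ^ n - y ^ n) : π ^ m ∣ x - y :=
  hπ.pow_dvd_of_dvd_mul_left m (not_dvd_geom_sum₂ hπ hxy hx hn) (by rwa [geom_sum₂_mul])

namespace HenselianRing

variable {R : Type*} [CommRing R] {I : Ideal R} [HenselianRing R I] {n : ℕ}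

theorem exists_pow_eq_one_sub_mem (hn : IsUnit (n : R)) {x : R} (hx : x ^ n - 1 ∈ I) :
    ∃ ζ : R, ζ ^ n = 1 ∧ ζ - x ∈ I := by
  rcases n.eq_zero_or_pos with rfl | hn0
  · exact ⟨x, by simp⟩
  have hxI : IsUnit (Ideal.Quotient.mk I x) := by
    refine IsUnit.of_pow_eq_one ?_ hn0.ne'
    rwa [← map_pow, ← map_one (Ideal.Quotient.mk I), Ideal.Quotient.eq]
  have hderiv : IsUnit (Ideal.Quotient.mk I ((X ^ n - C 1 : R[X]).derivative.eval x)) := by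
    simpa [derivative_X_pow] using (hn.map (Ideal.Quotient.mk I)).mul (hxI.pow (n - 1))
  obtain ⟨ζ, hζ, hζx⟩ :=
    is_henselian (X ^ n - C 1) (monic_X_pow_sub_C 1 hn0.ne') x (by simpa using hx) hderiv
  exact ⟨ζ, by simpa [sub_eq_zero] using hζ, hζx⟩

theorem exists_pow_eq_one_sub_mul_mem (hn : IsUnit (n : R)) {x y : R} (hy : IsUnit y)
    (hxy : x ^ n - y ^ n ∈ I) : ∃ ζ : R, ζ ^ n = 1 ∧ x - y * ζ ∈ I := by
  obtain ⟨u, rfl⟩ := hy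
  have hc : (x * ↑u⁻¹) ^ n - 1 = (x ^ n - u ^ n) * ↑u⁻¹ ^ n := by
    rw [sub_mul, ← mul_pow, ← mul_pow, u.mul_inv, one_pow, mul_pow]
  obtain ⟨ζ, hζ, hζc⟩ := exists_pow_eq_one_sub_mem hn (hc ▸ I.mul_mem_right _ hxy)
  refine ⟨ζ, hζ, ?_⟩
  have hxζ : x - u * ζ = -(u * (ζ - x * ↑u⁻¹)) := by
    rw [mul_sub, mul_left_comm, u.mul_inv, mul_one]; ring
  exact hxζ ▸ I.neg_mem (I.mul_mem_left _ hζc)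

end HenselianRing

theorem stmt_16_general (p : ℕ) [Fact p.Prime] (k : ℕ) (hk : 2 ≤ k)
    (a b : ℤ) (hab : IsCoprime (a * b) (p : ℤ))
    (h1 : (p : ℤ) ^ (k - 1) ∣ a ^ (p - 1) - b ^ (p - 1))
    (h2 : ¬ ((p : ℤ) ^ (k - 1) ∣ a - b)) (h3 : ¬ ((p : ℤ) ^ (k - 1) ∣ a + b)) :
    ∃ ζ : ℤ_[p], ζ ^ (p - 1) = 1 ∧ ζ ≠ 1 ∧ ζ ≠ -1 ∧
      ‖(a : ℤ_[p]) - (b : ℤ_[p]) * ζ‖ ≤ (p : ℝ) ^ (-(k : ℤ) + 1) := by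
  have hmem (z : ℤ_[p]) : z ∈ IsLocalRing.maximalIdeal ℤ_[p] ↔ (p : ℤ_[p]) ∣ z := by
    rw [PadicInt.maximalIdeal_eq_span_p, Ideal.mem_span_singleton]
  have hunit : IsUnit ((a * b : ℤ) : ℤ_[p]) :=
    PadicInt.isUnit_iff.mpr (PadicInt.norm_intCast_eq_one_iff.mpr hab)
  obtain ⟨ha, hb⟩ : IsUnit (a : ℤ_[p]) ∧ IsUnit (b : ℤ_[p]) := by simpa using hunit
  have hp1 : IsUnit ((p - 1 : ℕ) : ℤ_[p]) :=
    PadicInt.isUnit_iff.mpr PadicInt.norm_natCast_p_sub_one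
  have hpow : (p : ℤ_[p]) ^ (k - 1) ∣ (a : ℤ_[p]) ^ (p - 1) - (b : ℤ_[p]) ^ (p - 1) := by
    exact_mod_cast Int.cast_dvd_cast _ _ h1
  obtain ⟨ζ, hζ, hζa⟩ := HenselianRing.exists_pow_eq_one_sub_mul_mem hp1 hb
    ((hmem _).mpr ((dvd_pow_self _ (by omega)).trans hpow))
  have hdvd : (p : ℤ_[p]) ^ (k - 1) ∣ (a : ℤ_[p]) - b * ζ :=
    PadicInt.prime_p.pow_dvd_sub_of_pow_dvd_pow_sub_pow ((hmem _).mp hζa)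
      (PadicInt.irreducible_p.not_dvd_isUnit ha) (PadicInt.irreducible_p.not_dvd_isUnit hp1)
      (by rwa [mul_pow, hζ, mul_one])
  have hnorm : ‖(a : ℤ_[p]) - b * ζ‖ ≤ (p : ℝ) ^ (-((k - 1 : ℕ) : ℤ)) :=
    (PadicInt.norm_le_pow_iff_mem_span_pow _ _).mpr (Ideal.mem_span_singleton.mpr hdvd)
  have hdvd_of_eq_intCast (ε : ℤ) (h : ζ = ε) : (p : ℤ) ^ (k - 1) ∣ a - b * ε := by
    rw [← PadicInt.norm_int_le_pow_iff_dvd]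
    push_cast
    rwa [← h]
  refine ⟨ζ, hζ, fun h => h2 ?_, fun h => h3 ?_, ?_⟩
  · simpa using hdvd_of_eq_intCast 1 (by simp [h])
  · simpa using hdvd_of_eq_intCast (-1) (by simp [h])
  · convert hnorm using 2
    omega

theorem stmt_16 (p : ℕ) [Fact p.Prime] (hp2 : p ≠ 2) (k : ℕ) (hk : 2 ≤ k)
    (a b : ℤ) (hab : IsCoprime (a * b) (p : ℤ))
    (h1 : (p : ℤ) ^ (k - 1) ∣ a ^ (p - 1) - b ^ (p - 1))
    (h2 : ¬ ((p : ℤ) ^ (k - 1) ∣ a - b)) (h3 : ¬ ((p : ℤ) ^ (k - 1) ∣ a + b)) :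
    ∃ ζ : ℤ_[p], ζ ^ (p - 1) = 1 ∧ ζ ≠ 1 ∧ ζ ≠ -1 ∧
      ‖(a : ℤ_[p]) - (b : ℤ_[p]) * ζ‖ ≤ (p : ℝ) ^ (-(k : ℤ) + 1) :=
  stmt_16_general p k hk a b hab h1 h2 h3
end
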